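/- For θ strictly between 1/2 and 1 and α_i ∈ (0,1], the per-file expected cost Σ_{j=0}^∞ q_j max{α_i((1−2θ)j − θn/M) + θ, (1−θ)(1 − α_i n/M)} equals θ·Σ_{j<1/α_i} q_j(1 − α_i(j + n/M)) + (1−θ)·[Σ_{j<1/α_i} q_j·jα_i + (Σ_{j≥1/α_i} q_j)(1 − α_i n/M)], i.e., h decomposes as θf + (1−θ)g with the downlink and D2D rates of equations (18) and (21). -/
import Mathlib


open Finset

theorem per_file_cost_decomposition (k : ℕ) (hk : 0 < k)
    (α : ℝ) (hα : α = 1 / (k : ℝ))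
    (n M : ℕ) (hn : 0 < n) (hnM : n ≤ M)
    (θ : ℝ) (hθ : 1 / 2 < θ) (hθ1 : θ < 1)
    (q : ℕ → ℝ) (hq : ∀ j, 0 ≤ q j) (hqsum : Summable q) (hq1 : ∑' j : ℕ, q j = 1) :
    ∑' j : ℕ, q j * max (α * ((1 - 2 * θ) * (j : ℝ) - θ * ((n : ℝ) / (M : ℝ))) + θ)
                        ((1 - θ) * (1 - α * ((n : ℝ) / (M : ℝ))))
      = θ * (∑ j ∈ Finset.range k, q j * (1 - α * ((j : ℝ) + (n : ℝ) / (M : ℝ))))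
        + (1 - θ) * ((∑ j ∈ Finset.range k, q j * ((j : ℝ) * α))
            + (∑' j : ℕ, if k ≤ j then q j else 0) * (1 - α * ((n : ℝ) / (M : ℝ)))) := by
  have hk' : (0:ℝ) < (k:ℝ) := by exact_mod_cast hk
  have hαk : α * (k:ℝ) = 1 := by rw [hα]; field_simp
  have hα0 : 0 < α := by rw [hα]; positivity
  have hM : (0:ℝ) < (M:ℝ) := by
    have : 0 < M := lt_of_lt_of_le hn hnM
    exact_mod_cast this
  set r : ℝ := (n:ℝ) / (M:ℝ) with hr
  have hr0 : 0 ≤ r := by positivity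
  have hr1 : r ≤ 1 := by
    rw [hr, div_le_one hM]; exact_mod_cast hnM
  -- pointwise identity
  have key : ∀ j : ℕ,
      q j * max (α * ((1 - 2 * θ) * (j : ℝ) - θ * r) + θ) ((1 - θ) * (1 - α * r))
      = (if j < k then q j * (θ * (1 - α * ((j:ℝ) + r)) + (1 - θ) * ((j:ℝ) * α)) else 0)
        + (if k ≤ j then q j else 0) * ((1 - θ) * (1 - α * r)) := by
    intro j
    by_cases hj : j < k
    · have hjk : (j:ℝ) ≤ (k:ℝ) - 1 := by
        have : (j:ℝ) + 1 ≤ (k:ℝ) := by exact_mod_cast hj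
        linarith
      have hB : (1 - θ) * (1 - α * r) ≤ α * ((1 - 2 * θ) * (j : ℝ) - θ * r) + θ := by
        nlinarith [mul_le_mul_of_nonneg_left hjk hα0.le,
          mul_le_mul_of_nonneg_left hr1 hα0.le, mul_nonneg hα0.le hr0]
      rw [max_eq_left hB, if_pos hj, if_neg (by omega : ¬ k ≤ j)]
      ring
    · have hkj : (k:ℝ) ≤ (j:ℝ) := by exact_mod_cast Nat.le_of_not_lt hj
      have hA : α * ((1 - 2 * θ) * (j : ℝ) - θ * r) + θ ≤ (1 - θ) * (1 - α * r) := by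
        have h1 : 1 ≤ α * (j:ℝ) := by
          calc (1:ℝ) = α * (k:ℝ) := hαk.symm
          _ ≤ α * (j:ℝ) := by exact mul_le_mul_of_nonneg_left hkj hα0.le
        nlinarith [mul_nonneg hα0.le hr0]
      rw [max_eq_right hA, if_neg hj, if_pos (Nat.le_of_not_lt hj)]
      ring
  have hsum1 : Summable (fun j : ℕ =>
      if j < k then q j * (θ * (1 - α * ((j:ℝ) + r)) + (1 - θ) * ((j:ℝ) * α)) else 0) := by
    apply summable_of_finite_support
    apply Set.Finite.subset (Set.finite_Iio k)
    intro j hj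
    simp only [Function.mem_support] at hj
    by_contra h
    simp only [Set.mem_Iio, not_lt] at h
    exact hj (if_neg (by omega))
  have hsum2 : Summable (fun j : ℕ => if k ≤ j then q j else 0) := by
    have h : (fun j : ℕ => if k ≤ j then q j else 0) = Set.indicator {j : ℕ | k ≤ j} q := by
      ext j; simp [Set.indicator_apply]
    rw [h]; exact hqsum.indicator _
  calc ∑' j : ℕ, q j * max (α * ((1 - 2 * θ) * (j : ℝ) - θ * r) + θ) ((1 - θ) * (1 - α * r))
      = ∑' j : ℕ, ((if j < k then q j * (θ * (1 - α * ((j:ℝ) + r)) + (1 - θ) * ((j:ℝ) * α)) else 0)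
        + (if k ≤ j then q j else 0) * ((1 - θ) * (1 - α * r))) := by
        exact tsum_congr key
    _ = (∑' j : ℕ, if j < k then q j * (θ * (1 - α * ((j:ℝ) + r)) + (1 - θ) * ((j:ℝ) * α)) else 0)
        + (∑' j : ℕ, if k ≤ j then q j else 0) * ((1 - θ) * (1 - α * r)) := by
        rw [Summable.tsum_add hsum1 (hsum2.mul_right _), tsum_mul_right]
    _ = (∑ j ∈ Finset.range k, q j * (θ * (1 - α * ((j:ℝ) + r)) + (1 - θ) * ((j:ℝ) * α)))
        + (∑' j : ℕ, if k ≤ j then q j else 0) * ((1 - θ) * (1 - α * r)) := by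
        congr 1
        rw [tsum_eq_sum (s := Finset.range k)
          (by intro j hj; simp only [Finset.mem_range] at hj; exact if_neg (by omega))]
        apply Finset.sum_congr rfl
        intro j hj
        simp only [Finset.mem_range] at hj
        rw [if_pos hj]
    _ = θ * (∑ j ∈ Finset.range k, q j * (1 - α * ((j : ℝ) + r)))
        + (1 - θ) * ((∑ j ∈ Finset.range k, q j * ((j : ℝ) * α))
            + (∑' j : ℕ, if k ≤ j then q j else 0) * (1 - α * r)) := by
        have h : ∑ j ∈ Finset.range k, q j * (θ * (1 - α * ((j:ℝ) + r)) + (1 - θ) * ((j:ℝ) * α))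
            = θ * (∑ j ∈ Finset.range k, q j * (1 - α * ((j : ℝ) + r)))
              + (1 - θ) * (∑ j ∈ Finset.range k, q j * ((j : ℝ) * α)) := by
          rw [Finset.mul_sum, Finset.mul_sum, ← Finset.sum_add_distrib]
          exact Finset.sum_congr rfl (fun j _ => by ring)
        rw [h]; ring
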